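/- arXiv:1004.1188 — 2 statements merged into one kernel-verified Lean document; each statement's English description precedes it below -/
import Mathlib

section
/- For every n ∈ ℕ, the polynomials X_n^{n+1,†} and Y_n^{n+1,†} are hyperholomorphic constants: on the open set {x ∈ ℝ³ : x₁² + x₂² > 0} one has D X_n^{n+1,†} = 0, D Y_n^{n+1,†} = 0, D̄ X_n^{n+1,†} = 0 and D̄ Y_n^{n+1,†} = 0, where D = ∂/∂x₀ + e₁ ∂/∂x₁ + e₂ ∂/∂x₂ and D̄ = ∂/∂x₀ − e₁ ∂/∂x₁ − e₂ ∂/∂x₂ are applied from the left. -/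
open MeasureTheory Quaternion Filter

noncomputable section

/-- Euclidean space ℝ³. -/
abbrev E3 := EuclideanSpace ℝ (Fin 3)

/-- The imaginary unit e₁ of the quaternions. -/
def e1 : ℍ[ℝ] := ⟨0,1,0,0⟩

/-- The imaginary unit e₂ of the quaternions. -/
def e2 : ℍ[ℝ] := ⟨0,0,1,0⟩

/-- The standard basis vectors of ℝ³. -/
def ed (i : Fin 3) : E3 := EuclideanSpace.single i (1:ℝ)

/-- The generalized Cauchy–Riemann operator D f = ∂₀f + e₁ ∂₁f + e₂ ∂₂f (left action). -/
def Dq (f : E3 → ℍ[ℝ]) (x : E3) : ℍ[ℝ] :=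
  fderiv ℝ f x (ed 0) + e1 * fderiv ℝ f x (ed 1) + e2 * fderiv ℝ f x (ed 2)

/-- The conjugate generalized Cauchy–Riemann operator D̄ f = ∂₀f − e₁ ∂₁f − e₂ ∂₂f. -/
def Dbar (f : E3 → ℍ[ℝ]) (x : E3) : ℍ[ℝ] :=
  fderiv ℝ f x (ed 0) - e1 * fderiv ℝ f x (ed 1) - e2 * fderiv ℝ f x (ed 2)

/-- The open unit ball B in ℝ³. -/
def B3 : Set E3 := Metric.ball 0 1

/-- The real inner product ⟨f,g⟩ = ∫_B Sc(f̄ g) dV. -/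
def qInner (f g : E3 → ℍ[ℝ]) : ℝ := ∫ x in B3, (star (f x) * g x).re

/-- The associated L²-norm ‖f‖ = ⟨f,f⟩^{1/2}. -/
def qNorm (f : E3 → ℍ[ℝ]) : ℝ := Real.sqrt (qInner f f)

/-- f takes values in the reduced quaternions A = span{1,e₁,e₂} on s. -/
def IsAValuedOn (f : E3 → ℍ[ℝ]) (s : Set E3) : Prop := ∀ x ∈ s, (f x).imK = 0

/-- f is an A-valued monogenic function on s: continuously real-differentiable with Df = 0. -/
def MonogenicOn (f : E3 → ℍ[ℝ]) (s : Set E3) : Prop :=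
  ContDiffOn ℝ 1 f s ∧ IsAValuedOn f s ∧ ∀ x ∈ s, Dq f x = 0

/-- h is a square-integrable hyperholomorphic constant on B with values in span{e₁,e₂}:
monogenic with vanishing hypercomplex derivative. -/
def IsVecHyperholConst (h : E3 → ℍ[ℝ]) : Prop :=
  ContDiffOn ℝ 1 h B3 ∧ (∀ x ∈ B3, (h x).re = 0 ∧ (h x).imK = 0) ∧
  (∀ x ∈ B3, Dq h x = 0) ∧ (∀ x ∈ B3, Dbar h x = 0) ∧
  MemLp h 2 (volume.restrict B3)

/-- The Legendre polynomial of degree n (Rodrigues formula). -/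
def legP (n : ℕ) (t : ℝ) : ℝ :=
  (1 / (2^n * n.factorial : ℝ)) * iteratedDeriv n (fun s : ℝ => (s^2 - 1)^n) t

/-- The associated Legendre functions P_n^l, with the conventions
P_n^{-1} = -(1/(n(n+1))) P_n^1 for n ≥ 1, P_0^{-1} = 0, and P_n^l = 0 for l ≥ n+1. -/
def aLeg (n : ℕ) (l : ℤ) (t : ℝ) : ℝ :=
  if 0 ≤ l then
    if l ≤ (n : ℤ) then Real.sqrt (1 - t^2) ^ l.toNat * iteratedDeriv l.toNat (legP n) t else 0
  else if l = -1 then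
    if n = 0 then 0
    else -(1 / ((n : ℝ) * ((n : ℝ) + 1))) * (Real.sqrt (1 - t^2) * iteratedDeriv 1 (legP n) t)
  else 0

/-- Chebyshev polynomial of the first kind, ℤ-indexed (so that T_{-k} = T_k). -/
def Tch (k : ℤ) (c : ℝ) : ℝ := (Polynomial.Chebyshev.T ℝ k).eval c

/-- Chebyshev polynomial of the second kind, ℤ-indexed (so that U_{-k-2} = -U_k, U_{-1} = 0). -/
def Uch (k : ℤ) (c : ℝ) : ℝ := (Polynomial.Chebyshev.U ℝ k).eval c

/-- The homogeneous monogenic polynomial X_n^{l,†}. -/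
def Xd (n l : ℕ) (x : E3) : ℍ[ℝ] :=
  let t : ℝ := x 0 / ‖x‖
  let c : ℝ := x 1 / Real.sqrt ((x 1)^2 + (x 2)^2)
  let s : ℝ := x 2 / Real.sqrt ((x 1)^2 + (x 2)^2)
  ‖x‖^n •
    (⟨((n : ℝ) + l + 1)/2 * aLeg n l t * Tch l c,
      (1/4) * aLeg n ((l : ℤ) + 1) t * Tch ((l : ℤ) + 1) c
        + (1/4) * (((n : ℝ) + l + 1) * ((n : ℝ) + l)) * aLeg n ((l : ℤ) - 1) t *
          (-(Tch ((l : ℤ) - 1) c)),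
      (1/4) * aLeg n ((l : ℤ) + 1) t * (s * Uch l c)
        + (1/4) * (((n : ℝ) + l + 1) * ((n : ℝ) + l)) * aLeg n ((l : ℤ) - 1) t *
          (s * Uch ((l : ℤ) - 2) c),
      0⟩ : ℍ[ℝ])

/-- The homogeneous monogenic polynomial Y_n^{m,†}. -/
def Yd (n m : ℕ) (x : E3) : ℍ[ℝ] :=
  let t : ℝ := x 0 / ‖x‖
  let c : ℝ := x 1 / Real.sqrt ((x 1)^2 + (x 2)^2)
  let s : ℝ := x 2 / Real.sqrt ((x 1)^2 + (x 2)^2)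
  ‖x‖^n •
    (⟨((n : ℝ) + m + 1)/2 * aLeg n m t * (s * Uch ((m : ℤ) - 1) c),
      (1/4) * aLeg n ((m : ℤ) + 1) t * (s * Uch m c)
        - (1/4) * (((n : ℝ) + m + 1) * ((n : ℝ) + m)) * aLeg n ((m : ℤ) - 1) t *
          (s * Uch ((m : ℤ) - 2) c),
      (1/4) * aLeg n ((m : ℤ) + 1) t * (-(Tch ((m : ℤ) + 1) c))
        - (1/4) * (((n : ℝ) + m + 1) * ((n : ℝ) + m)) * aLeg n ((m : ℤ) - 1) t *
          Tch ((m : ℤ) - 1) c,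
      0⟩ : ℍ[ℝ])

/-- The normalization X_n^{l,†,∗} of X_n^{l,†} in L²(B;A;ℝ). -/
def Xs (n l : ℕ) (x : E3) : ℍ[ℝ] := (qNorm (Xd n l))⁻¹ • Xd n l x

/-- The normalization Y_n^{m,†,∗} of Y_n^{m,†} in L²(B;A;ℝ). -/
def Ys (n m : ℕ) (x : E3) : ℍ[ℝ] := (qNorm (Yd n m))⁻¹ • Yd n m x

/-! For `l = n + 1` the factors `P_n^{n+1}` and `P_n^{n+2}` vanish, and `P_n^n(t) = κ (1 - t²)^{n/2}`
because the `n`-th derivative `κ` of `P_n` is constant. With `w = x₁ + x₂ i`, de Moivre's formula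
turns `ρⁿ T_n(c)` and `ρⁿ s U_{n-1}(c)` into `Re wⁿ` and `Im wⁿ`, so off the `x₀`-axis
`X_n^{n+1,†} = K (-Re wⁿ e₁ + Im wⁿ e₂)` and `Y_n^{n+1,†} = -K (Im wⁿ e₁ + Re wⁿ e₂)`.
A function `Re g(w) u + Im g(w) v` with `g` holomorphic does not depend on `x₀`, and by the
Cauchy–Riemann equations `e₁∂₁ + e₂∂₂` maps it to `Re g' (e₁u + e₂v) - Im g' (e₂u - e₁v)`.
Both terms vanish once `e₁u + e₂v = 0`, since `e₂u - e₁v = e₁e₂ (e₁u + e₂v)`; so `D` and `D̄`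
kill it. -/

open Complex Polynomial Topology

@[simp] lemma e1_re : e1.re = 0 := rfl
@[simp] lemma e1_imI : e1.imI = 1 := rfl
@[simp] lemma e1_imJ : e1.imJ = 0 := rfl
@[simp] lemma e1_imK : e1.imK = 0 := rfl
@[simp] lemma e2_re : e2.re = 0 := rfl
@[simp] lemma e2_imI : e2.imI = 0 := rfl
@[simp] lemma e2_imJ : e2.imJ = 1 := rfl
@[simp] lemma e2_imK : e2.imK = 0 := rfl

def complexCoord : E3 →L[ℝ] ℂ :=
  ofRealCLM.comp (EuclideanSpace.proj 1) + I • ofRealCLM.comp (EuclideanSpace.proj 2)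

@[simp] lemma complexCoord_re (x : E3) : (complexCoord x).re = x 1 := by simp [complexCoord]

@[simp] lemma complexCoord_im (x : E3) : (complexCoord x).im = x 2 := by simp [complexCoord]

lemma complexCoord_ed_zero : complexCoord (ed 0) = 0 := by
  apply Complex.ext <;> simp [ed]

lemma complexCoord_ed_one : complexCoord (ed 1) = 1 := by
  apply Complex.ext <;> simp [ed]

lemma complexCoord_ed_two : complexCoord (ed 2) = I := by
  apply Complex.ext <;> simp [ed]

lemma norm_complexCoord (x : E3) : ‖complexCoord x‖ = Real.sqrt (x 1 ^ 2 + x 2 ^ 2) := by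
  rw [Complex.norm_def, Complex.normSq_apply]
  simp [sq]

lemma complexCoord_ne_zero {x : E3} (hx : 0 < x 1 ^ 2 + x 2 ^ 2) : complexCoord x ≠ 0 := by
  rw [← norm_pos_iff, norm_complexCoord]
  exact Real.sqrt_pos.mpr hx

lemma norm_mul_sqrt_one_sub_sq (x : E3) :
    ‖x‖ * Real.sqrt (1 - (x 0 / ‖x‖) ^ 2) = Real.sqrt (x 1 ^ 2 + x 2 ^ 2) := by
  have hx : ‖x‖ ^ 2 = x 0 ^ 2 + x 1 ^ 2 + x 2 ^ 2 := by
    simp [EuclideanSpace.norm_sq_eq, Fin.sum_univ_three, add_assoc]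
  rcases (norm_nonneg x).eq_or_lt with h0 | hpos
  · rw [← h0] at hx ⊢
    rw [zero_mul, eq_comm, Real.sqrt_eq_zero']
    nlinarith [sq_nonneg (x 0)]
  · rw [← Real.sqrt_sq hpos.le, ← Real.sqrt_mul (sq_nonneg _), Real.sqrt_sq hpos.le]
    congr 1
    field_simp
    linarith

def reImCLM (u v : ℍ[ℝ]) : ℂ →L[ℝ] ℍ[ℝ] := reCLM.smulRight u + imCLM.smulRight v

@[simp] lemma reImCLM_apply (u v : ℍ[ℝ]) (z : ℂ) : reImCLM u v z = z.re • u + z.im • v := by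
  simp [reImCLM]

lemma e1_mul_reImCLM_add_e2_mul {u v : ℍ[ℝ]} (huv : e1 * u + e2 * v = 0) (d : ℂ) :
    e1 * reImCLM u v d + e2 * reImCLM u v (d * I) = 0 := by
  have h : e2 * u - e1 * v = 0 := by
    rw [show e2 * u - e1 * v = e1 * e2 * (e1 * u + e2 * v) by
      ext <;> simp [Quaternion.re_mul, Quaternion.imI_mul, Quaternion.imJ_mul,
        Quaternion.imK_mul] <;> ring, huv, mul_zero]
  calc e1 * reImCLM u v d + e2 * reImCLM u v (d * I)
      = d.re • (e1 * u + e2 * v) - d.im • (e2 * u - e1 * v) := by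
        simp only [reImCLM_apply, mul_I_re, mul_I_im, mul_add, mul_smul_comm]
        module
    _ = 0 := by rw [huv, h, smul_zero, smul_zero, sub_zero]

section ReImComp

variable {f : E3 → ℍ[ℝ]} {g : ℂ → ℂ} {g' : ℂ} {x : E3} {u v : ℍ[ℝ]}

lemma fderiv_apply_of_eventuallyEq_reImCLM_comp (hg : HasDerivAt g g' (complexCoord x))
    (hf : f =ᶠ[𝓝 x] fun y => reImCLM u v (g (complexCoord y))) (y : E3) :
    fderiv ℝ f x y = reImCLM u v (g' * complexCoord y) := by
  have h : HasFDerivAt (fun y => reImCLM u v (g (complexCoord y)))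
      ((reImCLM u v).comp (g' • complexCoord)) x :=
    (reImCLM u v).hasFDerivAt.comp x (hg.comp_hasFDerivAt x complexCoord.hasFDerivAt)
  rw [(h.congr_of_eventuallyEq hf).fderiv]
  rfl

lemma Dq_eq_zero_of_eventuallyEq_reImCLM_comp (huv : e1 * u + e2 * v = 0)
    (hg : HasDerivAt g g' (complexCoord x))
    (hf : f =ᶠ[𝓝 x] fun y => reImCLM u v (g (complexCoord y))) : Dq f x = 0 := by
  simp only [Dq, fderiv_apply_of_eventuallyEq_reImCLM_comp hg hf]
  rw [complexCoord_ed_zero, complexCoord_ed_one, complexCoord_ed_two, mul_zero, map_zero,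
    zero_add, mul_one, e1_mul_reImCLM_add_e2_mul huv g']

lemma Dbar_eq_zero_of_eventuallyEq_reImCLM_comp (huv : e1 * u + e2 * v = 0)
    (hg : HasDerivAt g g' (complexCoord x))
    (hf : f =ᶠ[𝓝 x] fun y => reImCLM u v (g (complexCoord y))) : Dbar f x = 0 := by
  simp only [Dbar, fderiv_apply_of_eventuallyEq_reImCLM_comp hg hf]
  rw [complexCoord_ed_zero, complexCoord_ed_one, complexCoord_ed_two, mul_zero, map_zero,
    zero_sub, mul_one, sub_eq_add_neg, ← neg_add, e1_mul_reImCLM_add_e2_mul huv g', neg_zero]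

end ReImComp

lemma pow_eq_norm_pow_mul_exp (z : ℂ) (n : ℕ) :
    z ^ n = ((‖z‖ ^ n : ℝ) : ℂ) * exp ((n * arg z : ℝ) * I) := by
  conv_lhs => rw [← norm_mul_exp_arg_mul_I z]
  rw [mul_pow, ← exp_nat_mul]
  push_cast
  ring_nf

lemma re_pow_eq_norm_pow_mul_Tch {z : ℂ} (hz : z ≠ 0) (n : ℕ) :
    (z ^ n).re = ‖z‖ ^ n * Tch n (z.re / ‖z‖) := by
  rw [pow_eq_norm_pow_mul_exp, re_ofReal_mul, exp_ofReal_mul_I_re, Tch, ← cos_arg hz,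
    Chebyshev.T_real_cos]
  norm_cast

lemma im_pow_eq_norm_pow_mul_Uch {z : ℂ} (hz : z ≠ 0) (n : ℕ) :
    (z ^ n).im = ‖z‖ ^ n * (z.im / ‖z‖ * Uch (n - 1) (z.re / ‖z‖)) := by
  rw [pow_eq_norm_pow_mul_exp, im_ofReal_mul, exp_ofReal_mul_I_im, Uch, ← cos_arg hz, ← sin_arg,
    mul_comm (Real.sin _), Chebyshev.U_real_cos]
  push_cast
  ring_nf

lemma iteratedDeriv_polynomial_eval {𝕜 : Type*} [NontriviallyNormedField 𝕜] (p : 𝕜[X]) (k : ℕ) :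
    iteratedDeriv k (fun t => p.eval t) = fun t => (derivative^[k] p).eval t := by
  induction k generalizing p with
  | zero => rfl
  | succ k ih =>
    rw [iteratedDeriv_succ', Function.iterate_succ_apply, ← ih]
    exact congrArg _ (funext fun t => Polynomial.deriv p)

def legendrePoly (n : ℕ) : ℝ[X] :=
  C (1 / (2 ^ n * n.factorial : ℝ)) * derivative^[n] ((X ^ 2 - 1) ^ n)

lemma legP_eq_eval (n : ℕ) : legP n = fun t => (legendrePoly n).eval t := by
  funext t
  have h := congrFun (iteratedDeriv_polynomial_eval ((X ^ 2 - 1 : ℝ[X]) ^ n) n) t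
  simp only [eval_pow, eval_sub, eval_X, eval_one] at h
  simp [legP, legendrePoly, h]

lemma natDegree_legendrePoly_le (n : ℕ) : (legendrePoly n).natDegree ≤ n := by
  have h : ((X ^ 2 - 1 : ℝ[X]) ^ n).natDegree ≤ 2 * n :=
    (natDegree_pow_le_of_le n (by compute_degree!)).trans_eq (mul_comm _ _)
  have := natDegree_iterate_derivative ((X ^ 2 - 1 : ℝ[X]) ^ n) n
  exact (natDegree_C_mul_le _ _).trans (by omega)

lemma iteratedDeriv_legP_self (n : ℕ) (t : ℝ) :
    iteratedDeriv n (legP n) t = iteratedDeriv n (legP n) 0 := by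
  have h : (derivative^[n] (legendrePoly n)).natDegree = 0 := by
    have := natDegree_iterate_derivative (legendrePoly n) n
    have := natDegree_legendrePoly_le n
    omega
  rw [legP_eq_eval, iteratedDeriv_polynomial_eval, eq_C_of_natDegree_eq_zero h]
  simp

lemma aLeg_of_lt {n : ℕ} {l : ℤ} (h : (n : ℤ) < l) (t : ℝ) : aLeg n l t = 0 := by
  rw [aLeg, if_pos (by omega), if_neg (by omega)]

lemma aLeg_self (n : ℕ) (t : ℝ) :
    aLeg n n t = Real.sqrt (1 - t ^ 2) ^ n * iteratedDeriv n (legP n) 0 := by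
  rw [aLeg, if_pos (by omega), if_pos le_rfl, Int.toNat_natCast, iteratedDeriv_legP_self]

def extremeCoeff (n : ℕ) : ℝ := (n + 1) * (2 * n + 1) / 2 * iteratedDeriv n (legP n) 0

lemma Xd_self_add_one_eq {x : E3} (hx : 0 < x 1 ^ 2 + x 2 ^ 2) (n : ℕ) :
    Xd n (n + 1) x =
      reImCLM (-extremeCoeff n • e1) (extremeCoeff n • e2) (complexCoord x ^ n) := by
  have hw := complexCoord_ne_zero hx
  have hρ : ‖x‖ ^ n * Real.sqrt (1 - (x 0 / ‖x‖) ^ 2) ^ n = Real.sqrt (x 1 ^ 2 + x 2 ^ 2) ^ n := by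
    rw [← mul_pow, norm_mul_sqrt_one_sub_sq]
  have h1 : aLeg n ((n + 1 : ℕ) : ℤ) (x 0 / ‖x‖) = 0 := aLeg_of_lt (by omega) _
  have h2 : aLeg n ((n + 1 : ℕ) + 1 : ℤ) (x 0 / ‖x‖) = 0 := aLeg_of_lt (by omega) _
  have h3 : ((n + 1 : ℕ) - 1 : ℤ) = n := by omega
  have h4 : ((n + 1 : ℕ) - 2 : ℤ) = n - 1 := by omega
  simp only [Xd, h1, h2, h3, h4, aLeg_self]
  ext <;> simp [re_pow_eq_norm_pow_mul_Tch hw, im_pow_eq_norm_pow_mul_Uch hw, norm_complexCoord,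
    extremeCoeff, ← hρ] <;> ring

lemma Yd_self_add_one_eq {x : E3} (hx : 0 < x 1 ^ 2 + x 2 ^ 2) (n : ℕ) :
    Yd n (n + 1) x =
      reImCLM (-extremeCoeff n • e2) (-extremeCoeff n • e1) (complexCoord x ^ n) := by
  have hw := complexCoord_ne_zero hx
  have hρ : ‖x‖ ^ n * Real.sqrt (1 - (x 0 / ‖x‖) ^ 2) ^ n = Real.sqrt (x 1 ^ 2 + x 2 ^ 2) ^ n := by
    rw [← mul_pow, norm_mul_sqrt_one_sub_sq]
  have h1 : aLeg n ((n + 1 : ℕ) : ℤ) (x 0 / ‖x‖) = 0 := aLeg_of_lt (by omega) _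
  have h2 : aLeg n ((n + 1 : ℕ) + 1 : ℤ) (x 0 / ‖x‖) = 0 := aLeg_of_lt (by omega) _
  have h3 : ((n + 1 : ℕ) - 1 : ℤ) = n := by omega
  have h4 : ((n + 1 : ℕ) - 2 : ℤ) = n - 1 := by omega
  simp only [Yd, h1, h2, h3, h4, aLeg_self]
  ext <;> simp [re_pow_eq_norm_pow_mul_Tch hw, im_pow_eq_norm_pow_mul_Uch hw, norm_complexCoord,
    extremeCoeff, ← hρ] <;> ring

/-- X_n^{n+1,†} and Y_n^{n+1,†} are hyperholomorphic constants. -/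
theorem stmt7 (n : ℕ) (x : E3) (hx : (x 1)^2 + (x 2)^2 > 0) :
    Dq (Xd n (n + 1)) x = 0 ∧ Dq (Yd n (n + 1)) x = 0 ∧
    Dbar (Xd n (n + 1)) x = 0 ∧ Dbar (Yd n (n + 1)) x = 0 := by
  set K := extremeCoeff n
  have hU : ∀ᶠ y in 𝓝 x, 0 < y 1 ^ 2 + y 2 ^ 2 :=
    (isOpen_lt continuous_const (by fun_prop)).mem_nhds hx
  have hX := hU.mono fun y hy => Xd_self_add_one_eq hy n
  have hY := hU.mono fun y hy => Yd_self_add_one_eq hy n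
  have hXuv : e1 * (-K • e1) + e2 * (K • e2) = 0 := by
    ext <;> simp [Quaternion.re_mul, Quaternion.imI_mul, Quaternion.imJ_mul, Quaternion.imK_mul]
  have hYuv : e1 * (-K • e2) + e2 * (-K • e1) = 0 := by
    ext <;> simp [Quaternion.re_mul, Quaternion.imI_mul, Quaternion.imJ_mul, Quaternion.imK_mul]
  have hpow := hasDerivAt_pow n (complexCoord x)
  exact ⟨Dq_eq_zero_of_eventuallyEq_reImCLM_comp hXuv hpow hX,
    Dq_eq_zero_of_eventuallyEq_reImCLM_comp hYuv hpow hY,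
    Dbar_eq_zero_of_eventuallyEq_reImCLM_comp hXuv hpow hX,
    Dbar_eq_zero_of_eventuallyEq_reImCLM_comp hYuv hpow hY⟩
end
end

section
/- (Bohr's theorem) Let f(z) = Σ_{n=0}^∞ a_n z^n be analytic on the open unit disk 𝔻 ⊂ ℂ with |f(z)| < 1 for all z ∈ 𝔻. Then Σ_{n=0}^∞ |a_n| |z|^n < 1 for every z with |z| < 1/3. -/
/-!
On the circle of radius `r < 1` the function `g t = f (r e^{it})` has Fourier coefficient
`a₀` at frequency `0`, `aₙ rⁿ` at frequency `n` and none at negative frequencies. Integrating `g`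
against the kernel `1 + Re (c e^{-int})`, which is nonnegative with mean `1`, and using `|g| ≤ 1`
gives `|a₀ + c aₙ rⁿ / 2| ≤ 1` for every unimodular `c`; choosing `c` to align the two terms and
letting `r → 1` yields `|aₙ| ≤ 2 (1 - |a₀|)` for `n ≥ 1`. Hence for `|z| = ρ < 1/3`,
`∑ |aₙ| ρⁿ ≤ |a₀| + 2 (1 - |a₀|) ρ / (1 - ρ) < |a₀| + (1 - |a₀|) = 1`.
-/

open Filter
open Complex ComplexConjugate Real Asymptotics Topology

theorem integral_exp_int_mul_I (j : ℤ) :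
    ∫ t in (0 : ℝ)..2 * π, exp (j * t * I) = if j = 0 then 2 * (π : ℂ) else 0 := by
  split_ifs with hj
  · simp [hj]
  · have hjI : (j : ℂ) * I ≠ 0 := by simp [hj]
    simp_rw [mul_right_comm _ _ I]
    rw [integral_exp_mul_complex hjI,
      show (j : ℂ) * I * ↑(2 * π) = j * (2 * π * I) by push_cast; ring, exp_int_mul_two_pi_mul_I]
    simp

theorem summable_norm_mul_pow_of_summable_mul_pow {𝕜 : Type*} [NormedField 𝕜] {a : ℕ → 𝕜}
    {z : 𝕜} (hs : Summable fun n => a n * z ^ n) {r : ℝ} (hr : 0 ≤ r) (hrz : r < ‖z‖) :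
    Summable fun n => ‖a n‖ * r ^ n := by
  have hz : 0 < ‖z‖ := hr.trans_lt hrz
  have hbdd : (fun n => ‖a n * z ^ n‖) =O[atTop] (fun _ => (1 : ℝ)) :=
    hs.tendsto_atTop_zero.norm.isBigO_one ℝ |>.congr_left fun n => by simp
  refine summable_of_isBigO_nat (summable_geometric_of_lt_one (by positivity)
    ((div_lt_one hz).2 hrz)) ?_
  refine (hbdd.mul (isBigO_refl (fun n => (r / ‖z‖) ^ n) atTop)).congr (fun n => ?_) (fun n => ?_)
  · rw [norm_mul, norm_pow, div_pow, mul_assoc, mul_div_cancel₀ _ (by positivity)]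
  · simp

theorem exists_norm_eq_one_norm_add_mul_eq (x y : ℂ) :
    ∃ c : ℂ, ‖c‖ = 1 ∧ ‖x + c * y‖ = ‖x‖ + ‖y‖ := by
  rcases eq_or_ne x 0 with rfl | hx
  · exact ⟨1, by simp⟩
  rcases eq_or_ne y 0 with rfl | hy
  · exact ⟨1, by simp⟩
  refine ⟨x * ‖y‖ / (‖x‖ * y), by simp [hx, hy], ?_⟩
  have : x + x * ‖y‖ / (‖x‖ * y) * y = ((1 + ‖y‖ / ‖x‖ : ℝ) : ℂ) * x := by
    push_cast; field_simp
  rw [this, norm_mul, norm_real, Real.norm_of_nonneg (by positivity)]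
  field_simp

section FourierCoefficients

variable {b : ℕ → ℂ} {g : ℝ → ℂ} (hb : Summable fun m => ‖b m‖)
  (hg : ∀ t : ℝ, HasSum (fun m => b m * exp (m * t * I)) (g t))
include hb hg

theorem hasSum_integral_mul_exp_int_mul_I (k : ℤ) :
    HasSum (fun m : ℕ => b m * ∫ t in (0 : ℝ)..2 * π, exp ((m + k : ℤ) * t * I))
      (∫ t in (0 : ℝ)..2 * π, g t * exp (k * t * I)) := by
  have hexp (m : ℕ) (t : ℝ) : exp (m * t * I) * exp (k * t * I) = exp ((m + k : ℤ) * t * I) := by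
    rw [← Complex.exp_add]; push_cast; ring_nf
  simp_rw [← intervalIntegral.integral_const_mul, ← hexp, ← mul_assoc]
  refine intervalIntegral.hasSum_integral_of_dominated_convergence (fun m _ => ‖b m‖)
    (fun m => by fun_prop) (fun m => .of_forall fun t _ => ?_) (.of_forall fun _ _ => hb)
    intervalIntegrable_const (.of_forall fun t _ => (hg t).mul_right _)
  simp [Complex.norm_exp]

theorem integral_mul_exp_neg_nat_mul_I (n : ℕ) :
    ∫ t in (0 : ℝ)..2 * π, g t * exp (-n * t * I) = 2 * π * b n := by
  have := hasSum_integral_mul_exp_int_mul_I hb hg (-n)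
  simp only [integral_exp_int_mul_I, add_neg_eq_zero, Nat.cast_inj, mul_ite, mul_zero] at this
  push_cast at this
  rw [this.unique (hasSum_single n fun m hm => if_neg hm), if_pos rfl, mul_comm]

theorem integral_mul_exp_nat_mul_I {n : ℕ} (hn : n ≠ 0) :
    ∫ t in (0 : ℝ)..2 * π, g t * exp (n * t * I) = 0 := by
  have hmn (m : ℕ) : (m + n : ℤ) ≠ 0 := by omega
  have := hasSum_integral_mul_exp_int_mul_I hb hg n
  simp only [integral_exp_int_mul_I, hmn, if_false, mul_zero, Int.cast_natCast] at this
  exact this.unique hasSum_zero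

end FourierCoefficients

theorem integral_mul_one_add_re_mul_exp {h : ℝ → ℂ} (hh : Continuous h) (c : ℂ) (n : ℕ) :
    ∫ t in (0 : ℝ)..2 * π, h t * ((1 + (c * exp (-n * t * I)).re : ℝ) : ℂ) =
      (∫ t in (0 : ℝ)..2 * π, h t) + c / 2 * (∫ t in (0 : ℝ)..2 * π, h t * exp (-n * t * I)) +
        conj c / 2 * ∫ t in (0 : ℝ)..2 * π, h t * exp (n * t * I) := by
  have hK (t : ℝ) : ((1 + (c * exp (-n * t * I)).re : ℝ) : ℂ) =
      1 + c / 2 * exp (-n * t * I) + conj c / 2 * exp (n * t * I) := by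
    rw [ofReal_add, ofReal_one, re_eq_add_conj, map_mul, ← exp_conj]
    simp only [map_mul, map_neg, map_natCast, conj_ofReal, conj_I]
    ring_nf
  simp_rw [hK, mul_add, mul_one, mul_left_comm (h _)]
  rw [intervalIntegral.integral_add, intervalIntegral.integral_add,
    intervalIntegral.integral_const_mul, intervalIntegral.integral_const_mul]
  all_goals exact Continuous.intervalIntegrable (by fun_prop) _ _

theorem norm_add_norm_div_two_le_one_of_integral_eq {g : ℝ → ℂ} (hg : Continuous g)
    (hle : ∀ t, ‖g t‖ ≤ 1) {n : ℕ} (hn : n ≠ 0) {A B : ℂ}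
    (h0 : ∫ t in (0 : ℝ)..2 * π, g t = 2 * π * A)
    (hpos : ∫ t in (0 : ℝ)..2 * π, g t * exp (n * t * I) = 0)
    (hneg : ∫ t in (0 : ℝ)..2 * π, g t * exp (-n * t * I) = 2 * π * B) :
    ‖A‖ + ‖B‖ / 2 ≤ 1 := by
  obtain ⟨c, hc1, hc⟩ := exists_norm_eq_one_norm_add_mul_eq A (B / 2)
  set K : ℝ → ℝ := fun t => 1 + (c * exp (-n * t * I)).re
  have hK_nonneg (t : ℝ) : 0 ≤ K t := by
    have : ‖c * exp (-n * t * I)‖ = 1 := by simp [hc1, Complex.norm_exp]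
    linarith [neg_abs_le (c * exp (-n * t * I)).re, abs_re_le_norm (c * exp (-n * t * I))]
  have hK_integral : ∫ t in (0 : ℝ)..2 * π, K t = 2 * π := by
    have hEpos : ∫ t in (0 : ℝ)..2 * π, exp (n * t * I) = 0 := by
      simpa [hn] using integral_exp_int_mul_I n
    have hEneg : ∫ t in (0 : ℝ)..2 * π, exp (-n * t * I) = 0 := by
      simpa [hn] using integral_exp_int_mul_I (-n)
    have := integral_mul_one_add_re_mul_exp continuous_const c n (h := 1)
    simp only [Pi.one_apply, one_mul, hEpos, hEneg, mul_zero, add_zero] at this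
    rw [intervalIntegral.integral_ofReal, intervalIntegral.integral_const, sub_zero, real_smul,
      mul_one] at this
    exact ofReal_injective (this.trans (by push_cast; rfl))
  have hbound : ‖∫ t in (0 : ℝ)..2 * π, g t * K t‖ ≤ ∫ t in (0 : ℝ)..2 * π, K t := by
    refine intervalIntegral.norm_integral_le_of_norm_le (by positivity) (.of_forall fun t _ => ?_)
      (Continuous.intervalIntegrable (by fun_prop) _ _)
    rw [norm_mul, norm_real, Real.norm_of_nonneg (hK_nonneg t)]
    exact mul_le_of_le_one_left (hK_nonneg t) (hle t)
  have h2π : ‖(2 * π : ℂ)‖ = 2 * π := by simp [abs_of_pos pi_pos]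
  rw [integral_mul_one_add_re_mul_exp hg, h0, hpos, hneg, hK_integral,
    show 2 * π * A + c / 2 * (2 * π * B) + conj c / 2 * 0 = 2 * π * (A + c * (B / 2)) by ring,
    norm_mul, h2π, hc, norm_div, Complex.norm_ofNat] at hbound
  nlinarith [pi_pos]

theorem exists_hasSum_mul_pow_lt_one {c : ℕ → ℝ} (hc_nonneg : ∀ n, 0 ≤ c n) (hc0 : c 0 < 1)
    (hc : ∀ n, n ≠ 0 → c n ≤ 2 * (1 - c 0)) {r : ℝ} (hr0 : 0 ≤ r) (hr : r < 1 / 3) :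
    ∃ S, HasSum (fun n => c n * r ^ n) S ∧ S < 1 := by
  have hr1 : r < 1 := by linarith
  have hgeo := (hasSum_geometric_of_lt_one hr0 hr1).mul_left (2 * (1 - c 0) * r)
  have htail_le (n : ℕ) : c (n + 1) * r ^ (n + 1) ≤ 2 * (1 - c 0) * r * r ^ n := by
    calc c (n + 1) * r ^ (n + 1) = c (n + 1) * (r * r ^ n) := by ring
      _ ≤ 2 * (1 - c 0) * (r * r ^ n) := by gcongr; exact hc _ n.succ_ne_zero
      _ = 2 * (1 - c 0) * r * r ^ n := by ring
  obtain ⟨T, hT⟩ : Summable fun n => c (n + 1) * r ^ (n + 1) :=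
    hgeo.summable.of_nonneg_of_le (fun n => by have := hc_nonneg (n + 1); positivity) htail_le
  have hS := (hasSum_nat_add_iff (f := fun n => c n * r ^ n) 1).1 hT
  rw [Finset.sum_range_one, pow_zero, mul_one] at hS
  refine ⟨T + c 0, hS, ?_⟩
  have hT_le := hasSum_le htail_le hT hgeo
  rw [← div_eq_mul_inv, le_div_iff₀ (by linarith)] at hT_le
  nlinarith

theorem ofReal_mul_exp_mem_ball_zero_one {r : ℝ} (hr0 : 0 ≤ r) (hr1 : r < 1) (t : ℝ) :
    (r * exp (t * I) : ℂ) ∈ Metric.ball (0 : ℂ) 1 := by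
  rwa [mem_ball_zero_iff, norm_mul, norm_exp_ofReal_mul_I, mul_one, norm_real,
    Real.norm_of_nonneg hr0]

section UnitDisk

variable {f : ℂ → ℂ} {a : ℕ → ℂ}
  (hsum : ∀ z ∈ Metric.ball (0 : ℂ) 1, HasSum (fun n => a n * z ^ n) (f z))
include hsum

theorem coeff_zero_eq_apply_zero : a 0 = f 0 := by
  have := (hasSum_single (f := fun n => a n * (0 : ℂ) ^ n) 0 fun n hn => by simp [hn]).unique
    (hsum 0 (Metric.mem_ball_self one_pos))
  simpa using this

theorem summable_norm_coeff_mul_pow {r : ℝ} (hr0 : 0 ≤ r) (hr1 : r < 1) :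
    Summable fun n => ‖a n‖ * r ^ n := by
  have hs : ‖((1 + r) / 2 : ℂ)‖ = (1 + r) / 2 := by
    rw [show ((1 + r) / 2 : ℂ) = ((1 + r) / 2 : ℝ) by push_cast; rfl, norm_real,
      Real.norm_of_nonneg (by positivity)]
  refine summable_norm_mul_pow_of_summable_mul_pow (hsum _ ?_).summable hr0 (by rw [hs]; linarith)
  rw [mem_ball_zero_iff, hs]
  linarith

theorem hasSum_coeff_mul_pow_mul_exp {r : ℝ} (hr0 : 0 ≤ r) (hr1 : r < 1) (t : ℝ) :
    HasSum (fun m => a m * r ^ m * exp (m * t * I)) (f (r * exp (t * I))) := by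
  convert hsum _ (ofReal_mul_exp_mem_ball_zero_one hr0 hr1 t) using 2 with m
  rw [mul_pow, ← Complex.exp_nat_mul, mul_assoc, mul_assoc]

theorem norm_coeff_zero_add_norm_coeff_mul_pow_div_two_le_one
    (hf : ContinuousOn f (Metric.ball 0 1)) (hb : ∀ z ∈ Metric.ball (0 : ℂ) 1, ‖f z‖ ≤ 1)
    {r : ℝ} (hr0 : 0 ≤ r) (hr1 : r < 1) {n : ℕ} (hn : n ≠ 0) :
    ‖a 0‖ + ‖a n‖ * r ^ n / 2 ≤ 1 := by
  have hz := ofReal_mul_exp_mem_ball_zero_one hr0 hr1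
  have hsummable : Summable fun m => ‖a m * r ^ m‖ := by
    simpa [abs_of_nonneg hr0] using summable_norm_coeff_mul_pow hsum hr0 hr1
  have hg := hasSum_coeff_mul_pow_mul_exp hsum hr0 hr1
  have h0 := integral_mul_exp_neg_nat_mul_I hsummable hg 0
  simp only [Nat.cast_zero, neg_zero, zero_mul, Complex.exp_zero, mul_one, pow_zero] at h0
  have key := norm_add_norm_div_two_le_one_of_integral_eq
    (hf.comp_continuous (by fun_prop) hz) (fun t => hb _ (hz t)) hn h0
    (integral_mul_exp_nat_mul_I hsummable hg hn) (integral_mul_exp_neg_nat_mul_I hsummable hg n)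
  simpa [abs_of_nonneg hr0] using key

theorem norm_coeff_le_two_mul_one_sub_norm_coeff_zero
    (hf : ContinuousOn f (Metric.ball 0 1)) (hb : ∀ z ∈ Metric.ball (0 : ℂ) 1, ‖f z‖ ≤ 1)
    {n : ℕ} (hn : n ≠ 0) : ‖a n‖ ≤ 2 * (1 - ‖a 0‖) := by
  have htend : Tendsto (fun r : ℝ => ‖a n‖ * r ^ n) (𝓝[<] 1) (𝓝 ‖a n‖) := by
    have : Continuous fun r : ℝ => ‖a n‖ * r ^ n := by fun_prop
    simpa using (this.tendsto 1).mono_left nhdsWithin_le_nhds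
  refine le_of_tendsto htend ?_
  filter_upwards [Ioo_mem_nhdsLT zero_lt_one] with r hr
  linarith [norm_coeff_zero_add_norm_coeff_mul_pow_div_two_le_one hsum hf hb hr.1.le hr.2 hn]

end UnitDisk

/-- Bohr's theorem: if f = Σ aₙ zⁿ is analytic on the unit disk with
|f| < 1, then Σ |aₙ||z|ⁿ < 1 for |z| < 1/3. -/
theorem stmt18 (f : ℂ → ℂ) (a : ℕ → ℂ)
    (hf : DifferentiableOn ℂ f (Metric.ball 0 1))
    (hsum : ∀ z ∈ Metric.ball (0 : ℂ) 1, HasSum (fun n : ℕ => a n * z^n) (f z))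
    (hb : ∀ z ∈ Metric.ball (0 : ℂ) 1, ‖f z‖ < 1) :
    ∀ z : ℂ, ‖z‖ < 1/3 →
      ∃ S : ℝ, HasSum (fun n : ℕ => ‖a n‖ * ‖z‖^n) S ∧ S < 1 := by
  intro z hz
  have ha0 : ‖a 0‖ < 1 := by
    rw [coeff_zero_eq_apply_zero hsum]
    exact hb 0 (Metric.mem_ball_self one_pos)
  have hcoeff (n : ℕ) (hn : n ≠ 0) : ‖a n‖ ≤ 2 * (1 - ‖a 0‖) :=
    norm_coeff_le_two_mul_one_sub_norm_coeff_zero hsum hf.continuousOn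
      (fun z hz => (hb z hz).le) hn
  exact exists_hasSum_mul_pow_lt_one (fun n => norm_nonneg _) ha0 hcoeff (norm_nonneg z) hz
end
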